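/- Let 0 < a < 1, μ > 0 and ξ ≥ 0 be real numbers, and let K, N ∈ ℕ with K ≤ N. Then ∑_{m=0}^∞ (1+ξ)^m·(a^m)^{K+1}·(1 − a^m)^{N−K}·Po(m;μ) = e^{μ·ξ}·f_d(μ·(1+ξ), a; K+1, N−K). -/

import Mathlib

open Real Filter Set MeasureTheory

/-- Poisson PMF with parameter `μ` evaluated at `m`. -/
noncomputable def poissonPMF (μ : ℝ) (m : ℕ) : ℝ :=
  Real.exp (-μ) * μ ^ m / (Nat.factorial m : ℝ)

/-- `fd ν a k l = ∑_{j=0}^l C(l,j)·(−1)^j·e^{−ν(1−a^{k+j})}`. -/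
noncomputable def fd (ν a : ℝ) (k l : ℕ) : ℝ :=
  ∑ j ∈ Finset.range (l + 1),
    (Nat.choose l j : ℝ) * (-1) ^ j * Real.exp (-(ν * (1 - a ^ (k + j))))

/-! Expanding `(1 - a^m)^l` binomially turns the series into a finite combination of Poisson
probability generating functions `∑ₘ xᵐ Po(m; μ) = e^{μ(x - 1)}` at the points `x = (1 + ξ) b`,
`b = a^{K+1+j}`, and `e^{μ((1 + ξ) b - 1)} = e^{μξ} e^{-μ(1 + ξ)(1 - b)}`. -/

theorem hasSum_pow_mul_poissonPMF (μ x : ℝ) :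
    HasSum (fun m ↦ x ^ m * poissonPMF μ m) (exp (μ * (x - 1))) := by
  have hexp : HasSum (fun m ↦ (μ * x) ^ m / (m.factorial : ℝ)) (exp (μ * x)) := by
    simpa [Real.exp_eq_exp_ℝ] using NormedSpace.expSeries_div_hasSum_exp (μ * x)
  have hscaled := hexp.mul_left (exp (-μ))
  rw [← Real.exp_add, neg_add_eq_sub, ← mul_sub_one] at hscaled
  have hterm : (fun m ↦ x ^ m * poissonPMF μ m) =
      fun m ↦ exp (-μ) * ((μ * x) ^ m / (m.factorial : ℝ)) := by
    funext m
    rw [poissonPMF, mul_pow]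
    ring
  rwa [hterm]

theorem pow_mul_one_sub_pow_eq_sum {R : Type*} [CommRing R] (y : R) (k l : ℕ) :
    y ^ k * (1 - y) ^ l =
      ∑ j ∈ Finset.range (l + 1), (l.choose j : R) * (-1) ^ j * y ^ (k + j) := by
  rw [sub_eq_add_neg, add_comm, add_pow, Finset.mul_sum]
  refine Finset.sum_congr rfl fun j _ ↦ ?_
  rw [neg_pow, one_pow, pow_add]
  ring

theorem hasSum_pow_mul_binomial_moment_poissonPMF (μ x a : ℝ) (k l : ℕ) :
    HasSum (fun m ↦ x ^ m * (a ^ m) ^ k * (1 - a ^ m) ^ l * poissonPMF μ m)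
      (exp (μ * (x - 1)) * fd (μ * x) a k l) := by
  have hterm : ∀ m : ℕ, x ^ m * (a ^ m) ^ k * (1 - a ^ m) ^ l * poissonPMF μ m =
      ∑ j ∈ Finset.range (l + 1),
        (l.choose j : ℝ) * (-1) ^ j * ((x * a ^ (k + j)) ^ m * poissonPMF μ m) := by
    intro m
    rw [mul_assoc (x ^ m), pow_mul_one_sub_pow_eq_sum, Finset.mul_sum, Finset.sum_mul]
    refine Finset.sum_congr rfl fun j _ ↦ ?_
    rw [mul_pow, ← pow_mul, ← pow_mul, mul_comm m]
    ring
  have hexp_split : ∀ j : ℕ, exp (μ * (x * a ^ (k + j) - 1)) =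
      exp (μ * (x - 1)) * exp (-(μ * x * (1 - a ^ (k + j)))) := by
    intro j
    rw [← Real.exp_add]
    ring_nf
  simp_rw [hterm, fd, Finset.mul_sum]
  refine hasSum_sum fun j _ ↦ ?_
  rw [mul_left_comm, ← hexp_split]
  exact (hasSum_pow_mul_poissonPMF μ _).mul_left _

theorem poisson_tilted_moment_identity_general
    (a μ ξ : ℝ)
    (K N : ℕ) :
    ∑' m : ℕ, (1 + ξ) ^ m * (a ^ m) ^ (K + 1) * (1 - a ^ m) ^ (N - K) * poissonPMF μ m =
      Real.exp (μ * ξ) * fd (μ * (1 + ξ)) a (K + 1) (N - K) := by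
  rw [(hasSum_pow_mul_binomial_moment_poissonPMF μ (1 + ξ) a (K + 1) (N - K)).tsum_eq,
    add_sub_cancel_left]

theorem poisson_tilted_moment_identity
    (a μ ξ : ℝ) (ha0 : 0 < a) (ha1 : a < 1) (hμ : 0 < μ) (hξ : 0 ≤ ξ)
    (K N : ℕ) (hKN : K ≤ N) :
    ∑' m : ℕ, (1 + ξ) ^ m * (a ^ m) ^ (K + 1) * (1 - a ^ m) ^ (N - K) * poissonPMF μ m =
      Real.exp (μ * ξ) * fd (μ * (1 + ξ)) a (K + 1) (N - K) :=
  poisson_tilted_moment_identity_general a μ ξ K N
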